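/- (Theorem 1(ii)) For the SGPO and GRPO dynamics initialized at pS_0 = qS_0 = pG_0 = qG_0 = 1/2, one has pS_k > pG_k for every k ≥ 1. -/

import Mathlib

noncomputable def f11 (p : ℝ) : ℝ :=
  Real.log p + p * (1 - p) - Real.log (1 - p + p * Real.exp (p * (1 - p)))

noncomputable def f21 (p q : ℝ) : ℝ :=
  Real.log p + p * (1 - p) * q - Real.log (1 - p + p * Real.exp (p * (1 - p) * q))

noncomputable def f12 (p q : ℝ) : ℝ :=
  Real.log q + p ^ 2 * q * (1 - q) - Real.log (1 - q + q * Real.exp (p ^ 2 * q * (1 - q)))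

noncomputable def f22 (p q : ℝ) : ℝ :=
  Real.log q + p * q * (1 - q) - Real.log (1 - q + q * Real.exp (p * q * (1 - q)))

/-!
Each update is an exponential tilt: `exp (log p + a - log (1 - p + p * exp a))` is
`sigmoid (logit p + a)`, so both dynamics move the first coordinate by adding to its logit.
SGPO adds `p (1 - p)` and GRPO adds `p (1 - p) q` with `q < 1`, which is strictly less.
Since `p ↦ logit p + p (1 - p)` is increasing on `(0, 1)`, induction keeps `pG k ≤ pS k`,
and every step then makes the inequality strict.
-/

open Real Set

noncomputable def logit (p : ℝ) : ℝ := log p - log (1 - p)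

lemma exp_log_add_sub_log_eq_sigmoid {p : ℝ} (hp : p ∈ Ioo 0 1) (a : ℝ) :
    exp (log p + a - log (1 - p + p * exp a)) = sigmoid (logit p + a) := by
  obtain ⟨hp0, hp1⟩ := hp
  have h1p : 0 < 1 - p := by linarith
  have hden : 0 < 1 - p + p * exp a := by positivity
  rw [sigmoid_def, logit, exp_sub, exp_add, exp_log hp0, exp_log hden,
    show -(log p - log (1 - p) + a) = log (1 - p) - log p - a by ring,
    exp_sub, exp_sub, exp_log hp0, exp_log h1p]
  field_simp
  ring

lemma exp_log_add_sub_log_mem_Ioo {p : ℝ} (hp : p ∈ Ioo 0 1) (a : ℝ) :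
    exp (log p + a - log (1 - p + p * exp a)) ∈ Ioo 0 1 := by
  rw [exp_log_add_sub_log_eq_sigmoid hp]
  exact ⟨sigmoid_pos _, sigmoid_lt_one _⟩

lemma strictMonoOn_logit_add_mul_one_sub :
    StrictMonoOn (fun p ↦ logit p + p * (1 - p)) (Ioo 0 1) := by
  rintro p ⟨hp0, hp1⟩ r ⟨hr0, hr1⟩ hpr
  have hlog_div : (r - p) / r ≤ log r - log p := by
    have := log_le_sub_one_of_pos (div_pos hp0 hr0)
    rw [log_div hp0.ne' hr0.ne'] at this
    rw [sub_div, div_self hr0.ne']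
    linarith
  have hlog_one_sub : log (1 - r) < log (1 - p) := log_lt_log (by linarith) (by linarith)
  have hinv : 1 < 1 / r := by rw [lt_div_iff₀ hr0]; linarith
  have hquad : 0 < (r - p) / r + (r * (1 - r) - p * (1 - p)) := by
    rw [show (r - p) / r + (r * (1 - r) - p * (1 - p)) = (r - p) * (1 / r + 1 - r - p) by
      field_simp; ring]
    exact mul_pos (sub_pos.2 hpr) (by linarith)
  simp only [logit]
  linarith

lemma exp_f21_lt_exp_f11 {p q r : ℝ} (hp : p ∈ Ioo 0 1) (hr : r ∈ Ioo 0 1) (hpr : p ≤ r)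
    (hq : q < 1) : exp (f21 p q) < exp (f11 r) := by
  rw [f21, f11, exp_log_add_sub_log_eq_sigmoid hp, exp_log_add_sub_log_eq_sigmoid hr]
  apply sigmoid_lt
  have hvar : 0 < p * (1 - p) := mul_pos hp.1 (sub_pos.2 hp.2)
  calc logit p + p * (1 - p) * q < logit p + p * (1 - p) := by nlinarith
    _ ≤ logit r + r * (1 - r) :=
      strictMonoOn_logit_add_mul_one_sub.monotoneOn hp hr hpr

theorem sgpo_beats_grpo_first_coordinate_general (pS pG qG : ℕ → ℝ)
    (hpS0 : pS 0 = 1 / 2)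
    (hpG0 : pG 0 = 1 / 2) (hqG0 : qG 0 = 1 / 2)
    (hpS : ∀ k, pS (k + 1) = Real.exp (f11 (pS k)))
    (hpG : ∀ k, pG (k + 1) = Real.exp (f21 (pG k) (qG k)))
    (hqG : ∀ k, qG (k + 1) = Real.exp (f22 (pG k) (qG k))) :
    ∀ k : ℕ, 1 ≤ k → pS k > pG k := by
  have invariant : ∀ k, pS k ∈ Ioo 0 1 ∧ pG k ∈ Ioo 0 1 ∧ qG k ∈ Ioo 0 1 ∧ pG k ≤ pS k := by
    intro k
    induction k with
    | zero => rw [hpS0, hpG0, hqG0]; norm_num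
    | succ k ih =>
      obtain ⟨hS, hG, hQ, hle⟩ := ih
      rw [hpS, hpG, hqG]
      exact ⟨exp_log_add_sub_log_mem_Ioo hS _, exp_log_add_sub_log_mem_Ioo hG _,
        exp_log_add_sub_log_mem_Ioo hQ _, (exp_f21_lt_exp_f11 hG hS hle hQ.2).le⟩
  rintro (_ | k) hk
  · omega
  obtain ⟨hS, hG, hQ, hle⟩ := invariant k
  rw [hpS, hpG]
  exact exp_f21_lt_exp_f11 hG hS hle hQ.2

theorem sgpo_beats_grpo_first_coordinate (pS qS pG qG : ℕ → ℝ)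
    (hpS0 : pS 0 = 1 / 2) (hqS0 : qS 0 = 1 / 2)
    (hpG0 : pG 0 = 1 / 2) (hqG0 : qG 0 = 1 / 2)
    (hpS : ∀ k, pS (k + 1) = Real.exp (f11 (pS k)))
    (hqS : ∀ k, qS (k + 1) = Real.exp (f12 (pS k) (qS k)))
    (hpG : ∀ k, pG (k + 1) = Real.exp (f21 (pG k) (qG k)))
    (hqG : ∀ k, qG (k + 1) = Real.exp (f22 (pG k) (qG k))) :
    ∀ k : ℕ, 1 ≤ k → pS k > pG k :=
  sgpo_beats_grpo_first_coordinate_general pS pG qG hpS0 hpG0 hqG0 hpS hpG hqG
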